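/- arXiv:1105.2544 — 4 statements merged into one kernel-verified Lean document; each statement's English description precedes it below -/
import Mathlib

section
/- Let d₁,...,d_n be positive integers with d = d₁+···+d_n. For any multihomogeneous element w of N⟨x₁,...,x_n⟩ of multidegree (d₁,...,d_n), the image of w under the homomorphism x_i ↦ x^{λ_i} into the Novikov algebra A(λ) has the form f_w(λ)·x^{d₁λ₁+···+d_nλ_n−d+1} for some polynomial f_w ∈ k[λ₁,...,λ_n]. -/
/-- A (not necessarily unital or associative) ring `B` is *Novikov* if it satisfies the
right-symmetric identity `(ab)c − a(bc) = (ac)b − a(cb)` and the identity `a(bc) = b(ac)`. -/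
def IsNovikov (B : Type*) [NonUnitalNonAssocRing B] : Prop :=
  (∀ a b c : B, (a * b) * c - a * (b * c) = (a * c) * b - a * (c * b)) ∧
  (∀ a b c : B, a * (b * c) = b * (a * c))

/-- `ι : X → N` exhibits `N` as the free Novikov algebra over `k` on the set `X`:
`N` is a Novikov algebra and any map from `X` into a Novikov `k`-algebra `B` extends
uniquely to a `k`-algebra homomorphism `N → B`. -/
structure IsFreeNovikov (k : Type u) [Field k] {X : Type v} {N : Type w}
    [NonUnitalNonAssocRing N] [Module k N] [IsScalarTower k N N] [SMulCommClass k N N]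
    (ι : X → N) : Prop where
  novikov : IsNovikov N
  lift : ∀ (B : Type u') [NonUnitalNonAssocRing B] [Module k B] [IsScalarTower k B B]
      [SMulCommClass k B B], IsNovikov B → ∀ f : X → B,
      ∃! φ : N →ₙₐ[k] B, ∀ x, φ (ι x) = f x


/-- Multihomogeneous Novikov monomials: `NovMonomial ι a d` means `a` is a product (in some
arrangement of parentheses) of the generators `ι i`, with `i` occurring `d i` times. -/
inductive NovMonomial {n : ℕ} {N : Type*} [Mul N] (ι : Fin n → N) : N → (Fin n → ℕ) → Prop
  | gen (i : Fin n) : NovMonomial ι (ι i) (Pi.single i 1)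
  | mul {a b : N} {d e : Fin n → ℕ} :
      NovMonomial ι a d → NovMonomial ι b e → NovMonomial ι (a * b) (d + e)

/-- The derivation `D` of the group algebra `G` of `{x^f : f ∈ k[λ]}` over `k[λ]`,
`D(x^f) = f·x^{f−1}`, as a bare function; the Novikov product on `G` is `a∘b = D(a)·b`. -/
noncomputable def Dfun {k : Type*} [Field k] {n : ℕ}
    (a : AddMonoidAlgebra (MvPolynomial (Fin n) k) (MvPolynomial (Fin n) k)) :
    AddMonoidAlgebra (MvPolynomial (Fin n) k) (MvPolynomial (Fin n) k) :=
  Finsupp.sum a.coeff fun f r => AddMonoidAlgebra.single (f - 1) (r * f)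

/-! Since `x^f ∘ x^g = f·x^{f−1+g}`, every product of monomials adds the exponents and
subtracts `1`; by induction a monomial of multidegree `d` goes to a multiple of `x^E` with
`E = ∑ dᵢλᵢ − ∑ dᵢ + 1`, and linearity of the homomorphism passes this to the span. -/

open AddMonoidAlgebra MvPolynomial

noncomputable def novikovExponent (k : Type*) [Field k] {n : ℕ} (d : Fin n → ℕ) :
    MvPolynomial (Fin n) k :=
  (∑ i, (d i : MvPolynomial (Fin n) k) * X i) - ((∑ i, d i : ℕ) : MvPolynomial (Fin n) k) + 1

section

variable {k : Type*} [Field k] {n : ℕ}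

lemma novikovExponent_single (i : Fin n) : novikovExponent k (Pi.single i 1) = X i := by
  simp [novikovExponent, Pi.single_apply]

lemma novikovExponent_add (d e : Fin n → ℕ) :
    novikovExponent k (d + e) = novikovExponent k d - 1 + novikovExponent k e := by
  simp only [novikovExponent, Pi.add_apply, Nat.cast_add, add_mul, Finset.sum_add_distrib]
  ring

lemma Dfun_single (f r : MvPolynomial (Fin n) k) :
    Dfun (single f r) = single (f - 1) (r * f) := by
  simp [Dfun, Finsupp.sum_single_index]

lemma NovMonomial.exists_map_eq_single {N : Type*} [Mul N] {ι : Fin n → N}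
    {Φ : N → AddMonoidAlgebra (MvPolynomial (Fin n) k) (MvPolynomial (Fin n) k)}
    (hΦmul : ∀ a b : N, Φ (a * b) = Dfun (Φ a) * Φ b)
    (hΦgen : ∀ i : Fin n, Φ (ι i) = single (X i) 1) {a : N} {d : Fin n → ℕ}
    (ha : NovMonomial ι a d) : ∃ r, Φ a = single (novikovExponent k d) r := by
  induction ha with
  | gen i => exact ⟨1, by rw [hΦgen, novikovExponent_single]⟩
  | @mul a b d e _ _ iha ihb =>
    obtain ⟨r, hr⟩ := iha
    obtain ⟨s, hs⟩ := ihb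
    refine ⟨r * novikovExponent k d * s, ?_⟩
    rw [hΦmul, hr, hs, Dfun_single, single_mul_single, novikovExponent_add]

end

theorem freeNovikov_multihomogeneous_image_general (k : Type*) [Field k] (n : ℕ)
    (N : Type*) [NonUnitalNonAssocRing N] [Module k N]
    [IsScalarTower k N N] [SMulCommClass k N N]
    (ι : Fin n → N)
    (Φ : N →ₗ[k] AddMonoidAlgebra (MvPolynomial (Fin n) k) (MvPolynomial (Fin n) k))
    (hΦmul : ∀ a b : N, Φ (a * b) = Dfun (Φ a) * Φ b)
    (hΦgen : ∀ i : Fin n, Φ (ι i) = AddMonoidAlgebra.single (MvPolynomial.X i) 1)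
    (d : Fin n → ℕ) (w : N)
    (hw : w ∈ Submodule.span k {a : N | NovMonomial ι a d}) :
    ∃ fw : MvPolynomial (Fin n) k,
      Φ w = AddMonoidAlgebra.single
        ((∑ i, (d i : MvPolynomial (Fin n) k) * MvPolynomial.X i) -
          ((∑ i, d i : ℕ) : MvPolynomial (Fin n) k) + 1) fw := by
  have hspan : Submodule.span k {a : N | NovMonomial ι a d} ≤
      (LinearMap.range (lsingle (R := k) (novikovExponent k d))).comap Φ := by
    refine Submodule.span_le.2 fun a ha => ?_
    obtain ⟨r, hr⟩ := NovMonomial.exists_map_eq_single hΦmul hΦgen ha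
    exact ⟨r, hr.symm⟩
  obtain ⟨fw, hfw⟩ := hspan hw
  exact ⟨fw, hfw.symm⟩

/-- Let `d₁,…,dₙ` be positive integers with `d = d₁+⋯+dₙ`. For any
multihomogeneous element `w` of the free Novikov algebra of multidegree `(d₁,…,dₙ)`, the
image of `w` under the homomorphism `xᵢ ↦ x^{λᵢ}` into the Novikov algebra `A(λ) ⊆ G`
(with product `a∘b = D(a)·b`) has the form `f_w(λ)·x^{d₁λ₁+⋯+dₙλₙ−d+1}` for some
polynomial `f_w ∈ k[λ₁,…,λₙ]`. -/
theorem freeNovikov_multihomogeneous_image (k : Type*) [Field k] [CharZero k] (n : ℕ)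
    (N : Type*) [NonUnitalNonAssocRing N] [Module k N]
    [IsScalarTower k N N] [SMulCommClass k N N]
    (ι : Fin n → N) (hN : IsFreeNovikov k ι)
    (Φ : N →ₗ[k] AddMonoidAlgebra (MvPolynomial (Fin n) k) (MvPolynomial (Fin n) k))
    (hΦmul : ∀ a b : N, Φ (a * b) = Dfun (Φ a) * Φ b)
    (hΦgen : ∀ i : Fin n, Φ (ι i) = AddMonoidAlgebra.single (MvPolynomial.X i) 1)
    (d : Fin n → ℕ) (hd : ∀ i, 0 < d i) (w : N)
    (hw : w ∈ Submodule.span k {a : N | NovMonomial ι a d}) :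
    ∃ fw : MvPolynomial (Fin n) k,
      Φ w = AddMonoidAlgebra.single
        ((∑ i, (d i : MvPolynomial (Fin n) k) * MvPolynomial.X i) -
          ((∑ i, d i : ℕ) : MvPolynomial (Fin n) k) + 1) fw :=
  freeNovikov_multihomogeneous_image_general k n N ι Φ hΦmul hΦgen d w hw
end

section
/- If a nonzero linear combination Σ_T α_T f_T of the polynomials f_T ∈ k[λ₁,...,λ_n] is formed over all Novikov tableaux T of degree n on distinct letters x₁,...,x_n, then this combination is a nonzero polynomial; i.e., the family {f_T : T ∈ 𝕋_n} is linearly independent over k. -/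
/-- A Novikov tableau on the letters `{x₀,…,x_{n−1}}` (indexed by `Fin n`): a Young
diagram with `m` rows of lengths `r 0 ≥ r 1 ≥ ⋯ > 0`, together with an extra box (the
"nose") attached to the first row, each box filled with a letter, subject to the filling
rules: (F1) in equal-length rows the first-column entries do not increase downwards;
(F2) the entries in columns `≥ 2`, read row by row from the bottom row to the top row,
left to right, followed by the nose, form a non-decreasing sequence. -/
structure NovikovTableau (n : ℕ) where
  /-- number of rows of the Young diagram -/
  m : ℕ
  mpos : 0 < m
  /-- lengths of the rows of the Young diagram (the nose is counted separately) -/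
  r : Fin m → ℕ
  rpos : ∀ i, 0 < r i
  anti : ∀ i j : Fin m, i ≤ j → r j ≤ r i
  /-- the letter in box `(i,j)` of the Young diagram -/
  entry : (i : Fin m) → Fin (r i) → Fin n
  /-- the letter in the extra box attached to the first row -/
  nose : Fin n
  F1 : ∀ i j : Fin m, i ≤ j → r i = r j → entry j ⟨0, rpos j⟩ ≤ entry i ⟨0, rpos i⟩
  F2 : ∀ (i i' : Fin m) (j : Fin (r i)) (j' : Fin (r i')), 1 ≤ (j : ℕ) → 1 ≤ (j' : ℕ) →
      (i' < i ∨ (i = i' ∧ (j : ℕ) ≤ (j' : ℕ))) → entry i j ≤ entry i' j'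
  F2nose : ∀ (i : Fin m) (j : Fin (r i)), 1 ≤ (j : ℕ) → entry i j ≤ nose

/-- The degree of a Novikov tableau: the total number of boxes, including the nose. -/
def NovikovTableau.degree {n : ℕ} (T : NovikovTableau n) : ℕ := (∑ i, T.r i) + 1

/-- The polynomial `f_T ∈ k[λ₀,…,λ_{n−1}]` of a Novikov tableau `T`:
`f_T = ∏ᵢ λ_{i,1}(λ_{i,1}+λ_{i,2}−1)⋯(λ_{i,1}+⋯+λ_{i,rᵢ}−rᵢ+1)`, where `λ_{i,j}` is the
variable corresponding to the letter in box `(i,j)`. -/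
noncomputable def NovikovTableau.fT (k : Type*) [Field k] {n : ℕ} (T : NovikovTableau n) :
    MvPolynomial (Fin n) k :=
  ∏ i : Fin T.m, ∏ t : Fin (T.r i),
    ((∑ j : Fin ((t : ℕ) + 1), MvPolynomial.X (T.entry i (Fin.castLE t.isLt j))) -
      MvPolynomial.C ((t : ℕ) : k))

/-- The linear polynomial `g_T = d₀λ₀+⋯+d_{n−1}λ_{n−1} − d + 1` of a Novikov tableau `T`
of degree `d` in which the letter `xᵢ` occurs `dᵢ` times (the sum ranges over all boxes,
including the nose). -/
noncomputable def NovikovTableau.gT (k : Type*) [Field k] {n : ℕ} (T : NovikovTableau n) :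
    MvPolynomial (Fin n) k :=
  ((∑ i : Fin T.m, ∑ j : Fin (T.r i), MvPolynomial.X (T.entry i j)) +
      MvPolynomial.X T.nose) - MvPolynomial.C (((∑ i, T.r i : ℕ) : k))

/-- A Novikov tableau belongs to `𝕋_n` (is multilinear) if it has degree `n` and each of
the `n` letters occurs exactly once, i.e. the filling is injective on boxes. -/
def NovikovTableau.Multilinear {n : ℕ} (T : NovikovTableau n) : Prop :=
  T.degree = n ∧
  Function.Injective fun p : Option ((i : Fin T.m) × Fin (T.r i)) =>
    p.elim T.nose fun q => T.entry q.1 q.2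

/-!
Evaluate at the point `λ = w_T`, where `w_T v` is the length of the row headed by the letter
`v` (and `0` if `v` heads no row). At `w_T` the factors of `f_T` become `r_i - t ≠ 0`. If
`f_T(w_{T'}) ≠ 0`, the factors with `t = 0` put the first column of `T` inside that of `T'`;
if moreover `T` has at least as many rows as `T'`, the two first columns agree, the remaining
factors give `w_T ≤ w_{T'}`, and both have total weight `n - 1`, so `w_T = w_{T'}`. A multilinear
tableau is determined by `w_T`: it gives the first column and the row lengths, the nose is the
largest remaining letter, and (F2) places the other letters in increasing reading order. So the
matrix `(f_T(w_{T'}))` is triangular with respect to the number of rows, with nonzero diagonal.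
-/

theorem linearIndependent_of_triangular {ι R M α : Type*} [Ring R] [NoZeroDivisors R]
    [AddCommGroup M] [Module R M] [LinearOrder α] (v : ι → M) (φ : ι → M →ₗ[R] R)
    (μ : ι → α) (hdiag : ∀ i, φ i (v i) ≠ 0)
    (htri : ∀ i j, φ i (v j) ≠ 0 → j ≠ i → μ j < μ i) :
    LinearIndependent R v := by
  classical
  rw [linearIndependent_iff']
  intro s g hg
  by_contra! hne
  obtain ⟨i, hi, hgi⟩ := hne
  obtain ⟨i₀, hi₀, hmin⟩ :=
    (s.filter (g · ≠ 0)).exists_min_image μ ⟨i, Finset.mem_filter.2 ⟨hi, hgi⟩⟩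
  rw [Finset.mem_filter] at hi₀
  have hφ := congrArg (φ i₀) hg
  simp only [map_sum, map_smul, smul_eq_mul, map_zero] at hφ
  rw [Finset.sum_eq_single_of_mem i₀ hi₀.1] at hφ
  · exact mul_ne_zero hi₀.2 (hdiag i₀) hφ
  · intro j hj hji
    by_contra hne
    have hμ := hmin j (Finset.mem_filter.2 ⟨hj, left_ne_zero_of_mul hne⟩)
    exact (htri i₀ j (right_ne_zero_of_mul hne) hji).not_ge hμ

namespace NovikovTableau

variable {n : ℕ} {T T' : NovikovTableau n}

def letter (T : NovikovTableau n) : Option ((i : Fin T.m) × Fin (T.r i)) → Fin n :=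
  fun p => p.elim T.nose fun q => T.entry q.1 q.2

def first (T : NovikovTableau n) (i : Fin T.m) : Fin n := T.entry i ⟨0, T.rpos i⟩

def firstColumn (T : NovikovTableau n) : Finset (Fin n) := Finset.univ.image T.first

theorem letter_bijective (hT : T.Multilinear) : Function.Bijective T.letter := by
  rw [Fintype.bijective_iff_injective_and_card]
  refine ⟨hT.2, ?_⟩
  simp [Fintype.card_sigma, ← hT.1, degree]

theorem entry_inj (hT : T.Multilinear) {i i' : Fin T.m} {j : Fin (T.r i)} {j' : Fin (T.r i')}
    (h : T.entry i j = T.entry i' j') : i = i' ∧ (j : ℕ) = j' := by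
  have hs : (⟨i, j⟩ : (i : Fin T.m) × Fin (T.r i)) = ⟨i', j'⟩ :=
    Option.some_injective _ (hT.2 (a₁ := some ⟨i, j⟩) (a₂ := some ⟨i', j'⟩) h)
  exact ⟨congrArg Sigma.fst hs, congrArg (fun s => (s.2 : ℕ)) hs⟩

theorem entry_ne_nose (hT : T.Multilinear) (i : Fin T.m) (j : Fin (T.r i)) :
    T.entry i j ≠ T.nose := fun h => by
  simpa using hT.2 (a₁ := some ⟨i, j⟩) (a₂ := none) h

theorem exists_entry_eq (hT : T.Multilinear) {v : Fin n} (hv : v ≠ T.nose) :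
    ∃ i j, T.entry i j = v := by
  obtain ⟨p, hp⟩ := (letter_bijective hT).2 v
  cases p with
  | none => exact absurd hp.symm hv
  | some q => exact ⟨q.1, q.2, hp⟩

theorem first_injective (hT : T.Multilinear) : Function.Injective T.first :=
  fun _ _ h => (entry_inj hT h).1

theorem card_firstColumn (hT : T.Multilinear) : T.firstColumn.card = T.m := by
  rw [firstColumn, Finset.card_image_of_injective _ (first_injective hT), Finset.card_univ,
    Fintype.card_fin]

theorem mem_firstColumn_iff {v : Fin n} : v ∈ T.firstColumn ↔ ∃ i, T.first i = v := by
  simp [firstColumn]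

theorem entry_mem_firstColumn_iff (hT : T.Multilinear) (i : Fin T.m) (j : Fin (T.r i)) :
    T.entry i j ∈ T.firstColumn ↔ (j : ℕ) = 0 := by
  rw [mem_firstColumn_iff]
  constructor
  · rintro ⟨i', h⟩
    exact ((entry_inj hT h).2).symm
  · intro hj
    exact ⟨i, congrArg (T.entry i) (Fin.ext hj.symm)⟩

theorem nose_notMem_firstColumn (hT : T.Multilinear) : T.nose ∉ T.firstColumn := by
  rw [mem_firstColumn_iff]
  rintro ⟨i, h⟩
  exact entry_ne_nose hT i _ h

theorem lt_nose (hT : T.Multilinear) {v : Fin n} (hv : v ∉ T.firstColumn) (hne : v ≠ T.nose) :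
    v < T.nose := by
  obtain ⟨i, j, rfl⟩ := exists_entry_eq hT hne
  rw [entry_mem_firstColumn_iff hT] at hv
  exact (T.F2nose i j (by omega)).lt_of_ne hne

theorem nose_eq_of_firstColumn_eq (hT : T.Multilinear) (hT' : T'.Multilinear)
    (hF : T.firstColumn = T'.firstColumn) : T.nose = T'.nose := by
  by_contra hne
  have h₁ := lt_nose hT (hF ▸ nose_notMem_firstColumn hT') (Ne.symm hne)
  have h₂ := lt_nose hT' (hF ▸ nose_notMem_firstColumn hT) hne
  exact h₁.not_gt h₂

def weight (T : NovikovTableau n) (v : Fin n) : ℕ :=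
  ∑ i, if T.first i = v then T.r i else 0

theorem weight_first (hT : T.Multilinear) (i : Fin T.m) : T.weight (T.first i) = T.r i := by
  simp only [weight, (first_injective hT).eq_iff, Finset.sum_ite_eq', Finset.mem_univ, if_true]

theorem weight_eq_zero {v : Fin n} (hv : v ∉ T.firstColumn) : T.weight v = 0 :=
  Finset.sum_eq_zero fun i _ => if_neg fun h => hv (mem_firstColumn_iff.2 ⟨i, h⟩)

theorem weight_ne_zero_iff (hT : T.Multilinear) {v : Fin n} :
    T.weight v ≠ 0 ↔ v ∈ T.firstColumn := by
  refine ⟨fun h => by_contra fun hv => h (weight_eq_zero hv), fun hv => ?_⟩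
  obtain ⟨i, rfl⟩ := mem_firstColumn_iff.1 hv
  exact weight_first hT i ▸ (T.rpos i).ne'

theorem sum_weight_add_one (T : NovikovTableau n) : ∑ v, T.weight v + 1 = T.degree := by
  simp only [weight, degree]
  rw [Finset.sum_comm]
  simp

theorem sum_entry_rowPrefix (hT : T.Multilinear) {M : Type*} [AddCommMonoid M] {x : Fin n → M}
    (hx : ∀ v ∉ T.firstColumn, x v = 0) (i : Fin T.m) (t : Fin (T.r i)) :
    ∑ j : Fin ((t : ℕ) + 1), x (T.entry i (Fin.castLE t.isLt j)) = x (T.first i) := by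
  rw [Fin.sum_univ_succ, Finset.sum_eq_zero, add_zero]
  · rfl
  · intro j _
    exact hx _ (by simp [entry_mem_firstColumn_iff hT])

theorem entry_congr (T : NovikovTableau n) {i i' : Fin T.m} {j : Fin (T.r i)}
    {j' : Fin (T.r i')} (hi : i = i') (hj : (j : ℕ) = j') : T.entry i j = T.entry i' j' := by
  subst hi
  rw [Fin.ext hj]

theorem entry_lt_entry (hT : T.Multilinear) {i i' : Fin T.m} {j : Fin (T.r i)}
    {j' : Fin (T.r i')} (hj : 1 ≤ (j : ℕ)) (hj' : 1 ≤ (j' : ℕ))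
    (h : i' < i ∨ (i = i' ∧ (j : ℕ) < j')) : T.entry i j < T.entry i' j' := by
  refine (T.F2 i i' j j' hj hj' (h.imp_right fun h => ⟨h.1, h.2.le⟩)).lt_of_ne fun he => ?_
  obtain ⟨rfl, hjj⟩ := entry_inj hT he
  omega

def rowKey (T : NovikovTableau n) (i : Fin T.m) : ℕ ×ₗ Fin n := toLex (T.r i, T.first i)

theorem rowKey_strictAnti (hT : T.Multilinear) : StrictAnti T.rowKey := by
  intro i i' hii
  rcases (T.anti i i' hii.le).lt_or_eq with hr | hr
  · exact Prod.Lex.lt_iff.2 (Or.inl hr)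
  · exact Prod.Lex.lt_iff.2 (Or.inr ⟨hr, (T.F1 i i' hii.le hr.symm).lt_of_ne
      fun he => hii.ne' (first_injective hT he)⟩)

theorem range_rowKey (hT : T.Multilinear) :
    Set.range T.rowKey = (fun v => toLex (T.weight v, v)) '' T.firstColumn := by
  rw [firstColumn, Finset.coe_image, Finset.coe_univ, Set.image_univ, ← Set.range_comp]
  exact congrArg Set.range (funext fun i => by simp [rowKey, weight_first hT])

/-- The entries in columns `≥ 2`, indexed so that the lexicographic order is the reading order
of (F2): rows from the bottom up, each from left to right. -/
def tailWord (T : NovikovTableau n) : (Σₗ i : Fin T.m, Fin (T.r i.rev - 1)) → Fin n :=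
  fun x => T.entry (ofLex x).1.rev ⟨((ofLex x).2 : ℕ) + 1, by have := (ofLex x).2.isLt; omega⟩

theorem tailWord_strictMono (hT : T.Multilinear) : StrictMono T.tailWord := by
  rintro _ _ (⟨a, b, hi⟩ | ⟨a, b, hj⟩)
  · exact entry_lt_entry hT (by simp) (by simp) (Or.inl (Fin.rev_lt_rev.2 hi))
  · exact entry_lt_entry hT (by simp) (by simp) (Or.inr ⟨rfl, Nat.succ_lt_succ hj⟩)

theorem tailWord_toLex_rev (i : Fin T.m) (j : Fin (T.r i)) (hj : 1 ≤ (j : ℕ)) :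
    T.tailWord (toLex ⟨i.rev, ⟨(j : ℕ) - 1, by rw [Fin.rev_rev]; omega⟩⟩) = T.entry i j :=
  T.entry_congr (Fin.rev_rev i) (by simp; omega)

theorem range_tailWord (hT : T.Multilinear) :
    Set.range T.tailWord = {v | v ∉ T.firstColumn ∧ v ≠ T.nose} := by
  ext v
  constructor
  · rintro ⟨x, rfl⟩
    exact ⟨by simp [tailWord, entry_mem_firstColumn_iff hT], entry_ne_nose hT _ _⟩
  · rintro ⟨hv, hne⟩
    obtain ⟨i, j, rfl⟩ := exists_entry_eq hT hne
    rw [entry_mem_firstColumn_iff hT] at hv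
    exact ⟨_, tailWord_toLex_rev i j (by omega)⟩

theorem eq_of_rowKey_eq (hT : T.Multilinear) (hT' : T'.Multilinear) (hm : T.m = T'.m)
    (hrow : ∀ i, T.rowKey i = T'.rowKey (Fin.cast hm i)) (hnose : T.nose = T'.nose) :
    T = T' := by
  obtain ⟨m', mpos', r', rpos', anti', entry', nose', F1', F2', F2nose'⟩ := T'
  obtain rfl : T.m = m' := hm
  obtain rfl : T.r = r' := funext fun i => congrArg (fun p => (ofLex p).1) (hrow i)
  obtain rfl : T.nose = nose' := hnose
  have hfirst : ∀ i, T.first i = entry' i ⟨0, rpos' i⟩ :=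
    fun i => congrArg (fun p => (ofLex p).2) (hrow i)
  set T₂ : NovikovTableau n := ⟨T.m, mpos', T.r, rpos', anti', entry', T.nose, F1', F2', F2nose'⟩
  have hF : T.firstColumn = T₂.firstColumn := congrArg (Finset.univ.image ·) (funext hfirst)
  have htail := ((tailWord_strictMono hT).range_inj (tailWord_strictMono (T := T₂) hT')).1
    (by rw [range_tailWord hT, range_tailWord hT', hF])
  obtain rfl : T.entry = entry' := by
    funext i j
    rcases Nat.eq_zero_or_pos j with hj | hj
    · obtain rfl : j = ⟨0, T.rpos i⟩ := Fin.ext hj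
      exact hfirst i
    · have hx := congrFun htail (toLex ⟨i.rev, ⟨(j : ℕ) - 1, by rw [Fin.rev_rev]; omega⟩⟩)
      exact (T.tailWord_toLex_rev i j hj).symm.trans (hx.trans (T₂.tailWord_toLex_rev i j hj))
  rfl

theorem eq_of_weight_eq (hT : T.Multilinear) (hT' : T'.Multilinear)
    (hw : T.weight = T'.weight) : T = T' := by
  have hF : T.firstColumn = T'.firstColumn := by
    ext v
    rw [← weight_ne_zero_iff hT, ← weight_ne_zero_iff hT', hw]
  have hm : T.m = T'.m := by rw [← card_firstColumn hT, ← card_firstColumn hT', hF]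
  have hrow : T.rowKey = T'.rowKey ∘ finCongr hm :=
    ((rowKey_strictAnti hT).range_inj ((rowKey_strictAnti hT').comp_strictMono fun _ _ h => h)).1
      (by rw [(finCongr hm).surjective.range_comp, range_rowKey hT, range_rowKey hT', hw, hF])
  exact eq_of_rowKey_eq hT hT' hm (congrFun hrow) (nose_eq_of_firstColumn_eq hT hT' hF)

section Eval

variable (k : Type*) [Field k]

theorem eval_fT (T : NovikovTableau n) (x : Fin n → k) :
    MvPolynomial.eval x (T.fT k) =
      ∏ i : Fin T.m, ∏ t : Fin (T.r i),
        ((∑ j : Fin ((t : ℕ) + 1), x (T.entry i (Fin.castLE t.isLt j))) - (t : k)) := by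
  simp [fT, map_prod]

theorem firstColumn_subset_of_eval_fT_ne_zero
    (h : MvPolynomial.eval (fun v => (T'.weight v : k)) (T.fT k) ≠ 0) :
    T.firstColumn ⊆ T'.firstColumn := by
  rw [eval_fT, Finset.prod_ne_zero_iff] at h
  intro v hv
  obtain ⟨i, rfl⟩ := mem_firstColumn_iff.1 hv
  have hi := Finset.prod_ne_zero_iff.1 (h i (Finset.mem_univ i)) ⟨0, T.rpos i⟩ (Finset.mem_univ _)
  simp only [Fin.sum_univ_succ, Fin.sum_univ_zero, Nat.cast_zero, sub_zero, add_zero] at hi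
  by_contra hv'
  exact hi (congrArg Nat.cast (weight_eq_zero hv') |>.trans Nat.cast_zero)

variable [CharZero k]

theorem eval_fT_ne_zero_iff (hT : T.Multilinear) {q : Fin n → ℕ}
    (hq : ∀ v ∉ T.firstColumn, q v = 0) :
    MvPolynomial.eval (fun v => (q v : k)) (T.fT k) ≠ 0 ↔ ∀ i, T.r i ≤ q (T.first i) := by
  have hx : ∀ v ∉ T.firstColumn, (q v : k) = 0 := fun v hv => by simp [hq v hv]
  simp only [eval_fT, sum_entry_rowPrefix hT hx, Finset.prod_ne_zero_iff, Finset.mem_univ,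
    forall_const, sub_ne_zero, ne_eq, Nat.cast_inj]
  refine forall_congr' fun i => ⟨fun h => ?_, fun h t => by omega⟩
  by_contra! hlt
  exact h ⟨_, hlt⟩ rfl

theorem eval_fT_weight_self_ne_zero (hT : T.Multilinear) :
    MvPolynomial.eval (fun v => (T.weight v : k)) (T.fT k) ≠ 0 :=
  (eval_fT_ne_zero_iff k hT fun _ => weight_eq_zero).2 fun i => (weight_first hT i).ge

theorem weight_le_of_eval_fT_ne_zero (hT : T.Multilinear) (hF : T'.firstColumn ⊆ T.firstColumn)
    (h : MvPolynomial.eval (fun v => (T'.weight v : k)) (T.fT k) ≠ 0) : T.weight ≤ T'.weight := by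
  intro v
  by_cases hv : v ∈ T.firstColumn
  · obtain ⟨i, rfl⟩ := mem_firstColumn_iff.1 hv
    rw [weight_first hT]
    exact (eval_fT_ne_zero_iff k hT fun v hv => weight_eq_zero fun h => hv (hF h)).1 h i
  · simp [weight_eq_zero hv]

theorem eq_or_m_lt_of_eval_fT_ne_zero (hT : T.Multilinear) (hT' : T'.Multilinear)
    (h : MvPolynomial.eval (fun v => (T'.weight v : k)) (T.fT k) ≠ 0) : T = T' ∨ T.m < T'.m := by
  refine or_iff_not_imp_right.2 fun hm => ?_
  have hF : T.firstColumn = T'.firstColumn :=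
    Finset.eq_of_subset_of_card_le (firstColumn_subset_of_eval_fT_ne_zero k h)
      (by rw [card_firstColumn hT, card_firstColumn hT']; omega)
  have hle := weight_le_of_eval_fT_ne_zero k hT hF.ge h
  have hsum : ∑ v, T.weight v = ∑ v, T'.weight v :=
    add_right_cancel (by rw [sum_weight_add_one, sum_weight_add_one, hT.1, hT'.1])
  exact eq_of_weight_eq hT hT' (funext fun v =>
    (Finset.sum_eq_sum_iff_of_le fun v _ => hle v).1 hsum v (Finset.mem_univ v))

end Eval

end NovikovTableau

/-- The family `{f_T : T ∈ 𝕋_n}` of polynomials in `k[λ₁,…,λₙ]`, indexed by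
the Novikov tableaux of degree `n` on distinct letters `x₁,…,xₙ`, is linearly independent
over `k`; i.e. every nonzero linear combination `Σ_T α_T f_T` is a nonzero polynomial. -/
theorem novikovTableau_fT_linearIndependent (k : Type*) [Field k] [CharZero k] (n : ℕ) :
    LinearIndependent k
      (fun T : {T : NovikovTableau n // T.Multilinear} => T.1.fT k) := by
  refine linearIndependent_of_triangular _
    (fun T => (MvPolynomial.aeval fun v => (T.1.weight v : k)).toLinearMap) (fun T => T.1.m)
    (fun T => T.1.eval_fT_weight_self_ne_zero k T.2) fun T T' h hne => ?_
  exact (NovikovTableau.eq_or_m_lt_of_eval_fT_ne_zero k T'.2 T.2 h).resolve_left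
    fun he => hne (Subtype.ext he)
end

section
/- Let f(x,t₁,...,t_m) be a polynomial over an algebraically closed field k of characteristic 0, and let α₁ < ··· < α_m be nonnegative integers. If there is a point (c,c₁,...,c_m) ∈ k^{1+m} with f(c,c₁,...,c_m) = 0 and ∂f/∂t_m(c,c₁,...,c_m) ≠ 0, then the differential equation f(x, T^{(α₁)}, ..., T^{(α_m)}) = 0 has a solution T in the formal power series ring k[[x−c]]. -/
/-!
Write `T` in the variable `X = x - c` and let `M = α (Fin.last m)` be the highest order. For
`n ≥ 1`, the coefficient of `X ^ n` in `f(x, T^{(α 0)}, …)` does not depend on the coefficients of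
`T` beyond `X ^ (n + M)`, and it depends on that one affinely, with slope
`(n + 1) ⋯ (n + M) • ∂f/∂t_m(p)`, which is nonzero in characteristic zero (a first-order Taylor
expansion, since the perturbation `X ^ n` squares to zero modulo `X ^ (n + 1)`). Starting from the
initial series fixed by `T^{(α j)}(0) = p (j + 1)`, the coefficients of the equation can thus be
killed one at a time, Hensel style, and the approximations converge `X`-adically.
-/

namespace MvPolynomial

variable {R A σ : Type*} [CommSemiring R] [CommRing A] [Algebra R A]

theorem dvd_aeval_sub_aeval {a : A} {s s' : σ → A} (h : ∀ j, a ∣ s j - s' j)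
    (f : MvPolynomial σ R) : a ∣ aeval s f - aeval s' f := by
  induction f using MvPolynomial.induction_on with
  | C r => simp
  | add g g' hg hg' => simpa only [map_add, add_sub_add_comm] using dvd_add hg hg'
  | mul_X g j hg =>
    have hsplit : aeval s (g * X j) - aeval s' (g * X j) =
        (aeval s g - aeval s' g) * s j + aeval s' g * (s j - s' j) := by
      simp only [map_mul, aeval_X]; ring
    rw [hsplit]
    exact dvd_add (dvd_mul_of_dvd_left hg _) (dvd_mul_of_dvd_right (h j) _)

theorem sq_dvd_aeval_update_add_sub [DecidableEq σ] (s : σ → A) (i : σ) (y : A)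
    (f : MvPolynomial σ R) :
    y ^ 2 ∣ aeval (Function.update s i (s i + y)) f - aeval s f - aeval s (pderiv i f) * y := by
  induction f using MvPolynomial.induction_on with
  | C r => simp
  | add g g' hg hg' => convert dvd_add hg hg' using 1; simp only [map_add]; ring
  | mul_X g j hg =>
    obtain ⟨q, hq⟩ := hg
    simp only [map_mul, aeval_X, pderiv_mul, map_add, pderiv_X]
    by_cases hj : j = i
    · subst hj
      refine ⟨q * s j + aeval s (pderiv j g) + q * y, ?_⟩
      simp only [Function.update_self, Pi.single_eq_same, map_one, mul_one]
      linear_combination (s j + y) * hq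
    · refine ⟨q * s j, ?_⟩
      simp only [Function.update_of_ne hj, Pi.single_eq_of_ne hj, map_zero, mul_zero, add_zero]
      linear_combination s j * hq

end MvPolynomial

namespace PowerSeries

variable {R : Type*} [CommRing R]

theorem coeff_eq_of_X_pow_dvd_sub {n : ℕ} {f g : R⟦X⟧} (h : X ^ (n + 1) ∣ f - g) :
    coeff n f = coeff n g :=
  sub_eq_zero.mp (by simpa using X_pow_dvd_iff.mp h n n.lt_succ_self)

theorem X_pow_succ_dvd_of_coeff_eq_zero {n : ℕ} {f : R⟦X⟧} (h : X ^ n ∣ f) (hn : coeff n f = 0) :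
    X ^ (n + 1) ∣ f :=
  X_pow_dvd_iff.mpr fun i hi => (Nat.lt_succ_iff_lt_or_eq.mp hi).elim (X_pow_dvd_iff.mp h i)
    fun hin => hin ▸ hn

theorem eq_zero_of_forall_X_pow_dvd {f : R⟦X⟧} (h : ∀ n, X ^ n ∣ f) : f = 0 :=
  ext fun n => X_pow_dvd_iff.mp (h (n + 1)) n n.lt_succ_self

theorem X_pow_dvd_iterate_derivative {n a : ℕ} {f : R⟦X⟧} (h : X ^ (n + a) ∣ f) :
    X ^ n ∣ (d⁄dX R)^[a] f :=
  X_pow_dvd_iff.mpr fun i hi => by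
    rw [coeff_iterate_derivative, X_pow_dvd_iff.mp h (i + a) (by omega), mul_zero]

theorem iterate_derivative_C_mul_X_pow_add (c : R) (n a : ℕ) :
    (d⁄dX R)^[a] (C c * X ^ (n + a)) = C (c * (n + 1).ascFactorial a) * X ^ n := by
  ext i
  rw [coeff_iterate_derivative, coeff_C_mul_X_pow, coeff_C_mul_X_pow]
  by_cases hi : i = n
  · simp [hi, mul_comm]
  · simp [hi]

theorem constantCoeff_aeval {σ : Type*} (s : σ → R⟦X⟧) (f : MvPolynomial σ R) :
    constantCoeff (MvPolynomial.aeval s f) =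
      MvPolynomial.eval (fun j => constantCoeff (s j)) f := by
  simp [MvPolynomial.map_aeval]

end PowerSeries

namespace AlgebraicODE

open scoped PowerSeries
open PowerSeries (X C coeff constantCoeff)
open MvPolynomial (aeval eval pderiv)

variable {k : Type*} [Field k]

/-- `(x, T^{(α 0)}, …, T^{(α (m-1))})`, with `x = X + c` in the variable `X = x - c`. -/
noncomputable def jet {m : ℕ} (c : k) (α : Fin m → ℕ) (T : k⟦X⟧) : Fin (m + 1) → k⟦X⟧ :=
  Fin.cases (X + C c) fun j => (d⁄dX k)^[α j] T

theorem X_pow_dvd_jet_sub {m n M : ℕ} {α : Fin m → ℕ} (hα : ∀ j, α j ≤ M) (c : k)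
    {S S' : k⟦X⟧} (h : X ^ (n + M) ∣ S - S') (j : Fin (m + 1)) :
    X ^ n ∣ jet c α S j - jet c α S' j := by
  cases j using Fin.cases with
  | zero => simp [jet]
  | succ j =>
    simp only [jet, Fin.cases_succ, ← iterate_map_sub]
    exact PowerSeries.X_pow_dvd_iterate_derivative
      ((pow_dvd_pow X (by have := hα j; omega)).trans h)

theorem constantCoeff_jet_eq_of_X_pow_dvd_sub {m M : ℕ} {α : Fin m → ℕ} (hα : ∀ j, α j ≤ M)
    (c : k) {S S' : k⟦X⟧} (h : X ^ (1 + M) ∣ S - S') (j : Fin (m + 1)) :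
    constantCoeff (jet c α S j) = constantCoeff (jet c α S' j) := by
  rw [← sub_eq_zero, ← map_sub, ← PowerSeries.X_dvd_iff, ← pow_one X]
  exact X_pow_dvd_jet_sub hα c h j

noncomputable def initialSeries {m : ℕ} (α : Fin m → ℕ) (p : Fin (m + 1) → k) : k⟦X⟧ :=
  ∑ j, C (p j.succ / (α j).factorial) * X ^ α j

theorem constantCoeff_jet_initialSeries [CharZero k] {m : ℕ} {α : Fin m → ℕ}
    (hα : Function.Injective α) (p : Fin (m + 1) → k) (j : Fin (m + 1)) :
    constantCoeff (jet (p 0) α (initialSeries α p) j) = p j := by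
  cases j using Fin.cases with
  | zero => simp [jet]
  | succ j =>
    have hcoeff : coeff (α j) (initialSeries α p) = p j.succ / (α j).factorial := by
      rw [initialSeries, map_sum, Finset.sum_eq_single j]
      · simp
      · intro i _ hij
        simp [hα.ne hij.symm]
      · simp
    rw [jet, Fin.cases_succ, PowerSeries.constantCoeff_iterate_derivative, hcoeff,
      mul_div_cancel₀ _ (Nat.cast_ne_zero.mpr (Nat.factorial_ne_zero _))]

section

variable {m : ℕ} (f : MvPolynomial (Fin (m + 2)) k) (α : Fin (m + 1) → ℕ) (p : Fin (m + 2) → k)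

theorem X_pow_dvd_jet_add_C_mul_X_pow_sub_update {α} (hα : StrictMono α) (S : k⟦X⟧) (n : ℕ)
    (c : k) (j : Fin (m + 2)) :
    X ^ (n + 1) ∣ jet (p 0) α (S + C c * X ^ (n + α (Fin.last m))) j -
      Function.update (jet (p 0) α S) (Fin.last (m + 1))
        (jet (p 0) α S (Fin.last (m + 1)) + C (c * (n + 1).ascFactorial (α (Fin.last m))) * X ^ n)
        j := by
  cases j using Fin.cases with
  | zero => simp [jet]
  | succ j =>
    by_cases hj : j = Fin.last m
    · subst hj
      rw [Fin.succ_last, Function.update_self]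
      simp only [jet, ← Fin.succ_last, Fin.cases_succ, iterate_map_add,
        PowerSeries.iterate_derivative_C_mul_X_pow_add, sub_self, dvd_zero]
    · rw [Function.update_of_ne (by simpa [← Fin.succ_last] using hj)]
      simp only [jet, Fin.cases_succ, iterate_map_add, add_sub_cancel_left]
      refine PowerSeries.X_pow_dvd_iterate_derivative (dvd_mul_of_dvd_right (pow_dvd_pow X ?_) _)
      have := hα (Fin.lt_last_iff_ne_last.mpr hj)
      omega

theorem coeff_aeval_jet_add_C_mul_X_pow {α} (hα : StrictMono α) {S : k⟦X⟧}
    (hS : ∀ j, constantCoeff (jet (p 0) α S j) = p j) {n : ℕ} (hn : 1 ≤ n) (c : k) :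
    coeff n (aeval (jet (p 0) α (S + C c * X ^ (n + α (Fin.last m)))) f) =
      coeff n (aeval (jet (p 0) α S) f) +
        c * (n + 1).ascFactorial (α (Fin.last m)) * eval p (pderiv (Fin.last (m + 1)) f) := by
  classical
  set s := jet (p 0) α S
  set y : k⟦X⟧ := C (c * (n + 1).ascFactorial (α (Fin.last m))) * X ^ n with hy_def
  have hy_sq : X ^ (n + 1) ∣ y ^ 2 :=
    (pow_dvd_pow X (by omega : n + 1 ≤ 2 * n)).trans ⟨C (c * (n + 1).ascFactorial _) ^ 2, by ring⟩
  have htaylor :=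
    hy_sq.trans (MvPolynomial.sq_dvd_aeval_update_add_sub s (Fin.last (m + 1)) y f)
  have hlin : coeff n (aeval s (pderiv (Fin.last (m + 1)) f) * y) =
      c * (n + 1).ascFactorial (α (Fin.last m)) * eval p (pderiv (Fin.last (m + 1)) f) := by
    rw [hy_def, ← mul_assoc, PowerSeries.coeff_mul_X_pow', if_pos le_rfl, Nat.sub_self,
      PowerSeries.coeff_zero_eq_constantCoeff_apply, map_mul, PowerSeries.constantCoeff_aeval,
      PowerSeries.constantCoeff_C, funext hS, mul_comm]
  have hquad := PowerSeries.coeff_eq_of_X_pow_dvd_sub htaylor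
  rw [map_sub, hlin] at hquad
  rw [PowerSeries.coeff_eq_of_X_pow_dvd_sub (MvPolynomial.dvd_aeval_sub_aeval
    (X_pow_dvd_jet_add_C_mul_X_pow_sub_update p hα S n c) f)]
  linear_combination hquad

/-- The correction at step `n + 1` divides by the slope of `coeff_aeval_jet_add_C_mul_X_pow`. -/
noncomputable def approx : ℕ → k⟦X⟧
  | 0 => initialSeries α p
  | n + 1 => approx n +
      C (-coeff (n + 1) (aeval (jet (p 0) α (approx n)) f) /
        ((n + 1 + 1).ascFactorial (α (Fin.last m)) * eval p (pderiv (Fin.last (m + 1)) f))) *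
      X ^ (n + 1 + α (Fin.last m))

theorem X_pow_dvd_approx_sub {n N : ℕ} (h : n ≤ N) :
    X ^ (n + 1 + α (Fin.last m)) ∣ approx f α p N - approx f α p n := by
  induction N, h using Nat.le_induction with
  | base => rw [sub_self]; exact dvd_zero _
  | succ N hnN ih =>
    rw [approx, add_sub_right_comm]
    exact dvd_add ih (dvd_mul_of_dvd_right (pow_dvd_pow X (by omega)) _)

theorem constantCoeff_jet_approx [CharZero k] (hα : StrictMono α) (n : ℕ) (j : Fin (m + 2)) :
    constantCoeff (jet (p 0) α (approx f α p n) j) = p j := by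
  rw [constantCoeff_jet_eq_of_X_pow_dvd_sub (fun j => hα.monotone (Fin.le_last j)) _
    (X_pow_dvd_approx_sub f α p n.zero_le)]
  exact constantCoeff_jet_initialSeries hα.injective p j

theorem X_pow_dvd_aeval_jet_approx [CharZero k] (hα : StrictMono α) (h0 : eval p f = 0)
    (h1 : eval p (pderiv (Fin.last (m + 1)) f) ≠ 0) (n : ℕ) :
    X ^ (n + 1) ∣ aeval (jet (p 0) α (approx f α p n)) f := by
  induction n with
  | zero =>
    rw [zero_add, pow_one, PowerSeries.X_dvd_iff, PowerSeries.constantCoeff_aeval,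
      funext (constantCoeff_jet_approx f α p hα 0), h0]
  | succ n ih =>
    have hcongr : X ^ (n + 1) ∣
        aeval (jet (p 0) α (approx f α p (n + 1))) f - aeval (jet (p 0) α (approx f α p n)) f :=
      MvPolynomial.dvd_aeval_sub_aeval (X_pow_dvd_jet_sub (fun j => hα.monotone (Fin.le_last j))
        _ (X_pow_dvd_approx_sub f α p (Nat.le_succ n))) f
    refine PowerSeries.X_pow_succ_dvd_of_coeff_eq_zero ?_ ?_
    · simpa using dvd_add hcongr ih
    · rw [approx, coeff_aeval_jet_add_C_mul_X_pow f p hα (constantCoeff_jet_approx f α p hα n)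
        (Nat.le_add_left 1 n)]
      have : ((n + 1 + 1).ascFactorial (α (Fin.last m)) : k) ≠ 0 :=
        Nat.cast_ne_zero.mpr (Nat.ascFactorial_pos _ _).ne'
      field_simp
      ring

noncomputable def solution : k⟦X⟧ :=
  PowerSeries.mk fun i => coeff i (approx f α p i)

theorem X_pow_dvd_solution_sub_approx (n : ℕ) :
    X ^ (n + 1 + α (Fin.last m)) ∣ solution f α p - approx f α p n := by
  refine PowerSeries.X_pow_dvd_iff.mpr fun i hi => ?_
  rw [map_sub, solution, PowerSeries.coeff_mk, sub_eq_zero]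
  rcases le_total i n with hin | hni
  · exact (PowerSeries.coeff_eq_of_X_pow_dvd_sub
      ((pow_dvd_pow X (by omega)).trans (X_pow_dvd_approx_sub f α p hin))).symm
  · exact PowerSeries.coeff_eq_of_X_pow_dvd_sub
      ((pow_dvd_pow X (by omega)).trans (X_pow_dvd_approx_sub f α p hni))

theorem aeval_jet_solution [CharZero k] (hα : StrictMono α) (h0 : eval p f = 0)
    (h1 : eval p (pderiv (Fin.last (m + 1)) f) ≠ 0) :
    aeval (jet (p 0) α (solution f α p)) f = 0 :=
  PowerSeries.eq_zero_of_forall_X_pow_dvd fun n =>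
    (pow_dvd_pow X n.le_succ).trans <| by
      simpa using dvd_add (MvPolynomial.dvd_aeval_sub_aeval
        (X_pow_dvd_jet_sub (fun j => hα.monotone (Fin.le_last j)) (p 0)
          (X_pow_dvd_solution_sub_approx f α p n)) f)
        (X_pow_dvd_aeval_jet_approx f α p hα h0 h1 n)

end

end AlgebraicODE

theorem algebraic_ode_has_power_series_solution_general
    (k : Type*) [Field k] [CharZero k] (m : ℕ) (hm : 0 < m)
    (f : MvPolynomial (Fin (m + 1)) k) (α : Fin m → ℕ) (hα : StrictMono α)
    (p : Fin (m + 1) → k)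
    (h0 : MvPolynomial.eval p f = 0)
    (h1 : MvPolynomial.eval p (MvPolynomial.pderiv (Fin.last m) f) ≠ 0) :
    ∃ T : PowerSeries k,
      MvPolynomial.aeval
        (Fin.cases (PowerSeries.X + PowerSeries.C (p 0))
          (fun j : Fin m => (⇑(PowerSeries.derivative k))^[α j] T)) f = 0 := by
  obtain ⟨m, rfl⟩ := Nat.exists_eq_add_one_of_ne_zero hm.ne'
  exact ⟨_, AlgebraicODE.aeval_jet_solution f α p hα h0 h1⟩

/-- Let `f(x,t₁,…,t_m)` be a polynomial over an algebraically closed field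
`k` of characteristic 0 and `α₁ < ⋯ < α_m` nonnegative integers. If there is a point
`(c,c₁,…,c_m) ∈ k^{1+m}` with `f(c,c₁,…,c_m) = 0` and `∂f/∂t_m(c,c₁,…,c_m) ≠ 0`, then the
differential equation `f(x, T^{(α₁)}, …, T^{(α_m)}) = 0` has a solution `T` in the formal
power series ring `k[[x−c]]` (below `T` is a power series in the variable `u = x − c`,
so the variable `x` is substituted by `u + c`, and `T^{(α)}` is the `α`-th formal
derivative of `T`). -/
theorem algebraic_ode_has_power_series_solution
    (k : Type*) [Field k] [CharZero k] [IsAlgClosed k] (m : ℕ) (hm : 0 < m)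
    (f : MvPolynomial (Fin (m + 1)) k) (α : Fin m → ℕ) (hα : StrictMono α)
    (p : Fin (m + 1) → k)
    (h0 : MvPolynomial.eval p f = 0)
    (h1 : MvPolynomial.eval p (MvPolynomial.pderiv (Fin.last m) f) ≠ 0) :
    ∃ T : PowerSeries k,
      MvPolynomial.aeval
        (Fin.cases (PowerSeries.X + PowerSeries.C (p 0))
          (fun j : Fin m => (⇑(PowerSeries.derivative k))^[α j] T)) f = 0 :=
  algebraic_ode_has_power_series_solution_general k m hm f α hα p h0 h1
end

section
/- If h ∈ k[x,t₁,...,t_r] is irreducible over an algebraically closed field k and h genuinely depends on t_r, then there exists a point L ∈ k^{1+r} with h(L) = 0 and (∂h/∂t_r)(L) ≠ 0. -/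
/-!
If `∂h/∂t_r` vanished on the whole zero locus of `h`, the Nullstellensatz for the prime ideal
`(h)` would give `h ∣ ∂h/∂t_r`. In characteristic zero `∂h/∂t_r` is nonzero and of strictly
smaller degree in `t_r` than `h`, so this is impossible.
-/

namespace MvPolynomial

variable {σ R : Type*}

theorem ne_zero_of_degreeOf_pos [CommSemiring R] {i : σ} {f : MvPolynomial σ R}
    (hf : 0 < degreeOf i f) : f ≠ 0 := by
  rintro rfl
  simp at hf

theorem degreeOf_pderiv_lt [CommSemiring R] {i : σ} {f : MvPolynomial σ R}
    (hf : 0 < degreeOf i f) : degreeOf i (pderiv i f) < degreeOf i f := by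
  rw [degreeOf_lt_iff hf]
  intro m hm
  have hcoeff : coeff (m + Finsupp.single i 1) f ≠ 0 := by
    intro h0
    exact mem_support_iff.1 hm (by rw [coeff_pderiv, h0, zero_mul])
  have := monomial_le_degreeOf i (mem_support_iff.2 hcoeff)
  simp only [Finsupp.add_apply, Finsupp.single_eq_same] at this
  omega

theorem pderiv_ne_zero_of_degreeOf_pos [CommSemiring R] [NoZeroDivisors R] [CharZero R]
    {i : σ} {f : MvPolynomial σ R} (hf : 0 < degreeOf i f) : pderiv i f ≠ 0 := by
  classical
  obtain ⟨m, hm, hmi⟩ := Finset.exists_mem_eq_sup f.support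
    (support_nonempty.2 (ne_zero_of_degreeOf_pos hf)) (fun m => m i)
  rw [← degreeOf_eq_sup] at hmi
  have hle : Finsupp.single i 1 ≤ m := Finsupp.single_le_iff.2 (by omega)
  intro h0
  have hc := congrArg (coeff (m - Finsupp.single i 1)) h0
  rw [coeff_pderiv, tsub_add_cancel_of_le hle, coeff_zero] at hc
  exact mul_ne_zero (mem_support_iff.1 hm) (Nat.cast_add_one_ne_zero _) hc

theorem not_dvd_pderiv [CommSemiring R] [NoZeroDivisors R] [CharZero R]
    {i : σ} {f : MvPolynomial σ R} (hf : 0 < degreeOf i f) : ¬ f ∣ pderiv i f := by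
  rintro ⟨g, hg⟩
  have hg0 : g ≠ 0 := by
    rintro rfl
    exact pderiv_ne_zero_of_degreeOf_pos hf (by rw [hg, mul_zero])
  have := degreeOf_pderiv_lt hf
  rw [hg, degreeOf_mul_eq (ne_zero_of_degreeOf_pos hf) hg0] at this
  omega

theorem exists_aeval_eq_zero_and_aeval_ne_zero {k K : Type*} [Field k] [Field K] [Algebra k K]
    [IsAlgClosed K] [Finite σ] {f g : MvPolynomial σ k} (hf : Prime f) (hfg : ¬ f ∣ g) :
    ∃ x : σ → K, aeval x f = 0 ∧ aeval x g ≠ 0 := by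
  by_contra! hcon
  have : (Ideal.span {f}).IsPrime := (Ideal.span_singleton_prime hf.ne_zero).2 hf
  refine hfg (Ideal.mem_span_singleton.1 ?_)
  rw [← IsPrime.vanishingIdeal_zeroLocus (K := K) (Ideal.span {f}), mem_vanishingIdeal_iff]
  exact fun x hx => hcon x (hx f (Ideal.mem_span_singleton_self f))

end MvPolynomial

open MvPolynomial in
/-- If `h ∈ k[x,t₁,…,t_r]` is irreducible over an algebraically closed field
`k` of characteristic 0 and `h` genuinely depends on `t_r`, then there is a point
`L ∈ k^{1+r}` with `h(L) = 0` and `(∂h/∂t_r)(L) ≠ 0`. -/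
theorem irreducible_exists_nonsingular_point
    (k : Type*) [Field k] [CharZero k] [IsAlgClosed k] (r : ℕ)
    (h : MvPolynomial (Fin (r + 1)) k) (hirr : Irreducible h)
    (hdep : 0 < h.degreeOf (Fin.last r)) :
    ∃ L : Fin (r + 1) → k,
      MvPolynomial.eval L h = 0 ∧
      MvPolynomial.eval L (MvPolynomial.pderiv (Fin.last r) h) ≠ 0 := by
  exact exists_aeval_eq_zero_and_aeval_ne_zero (K := k) hirr.prime (not_dvd_pderiv hdep)
end
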